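/- Let A : Matrix (Fin m) (Fin n) ℤ have no zero row and no zero column. Then there exist natural numbers p, q, a matrix H : Matrix (Fin p) (Fin q) ℤ with all entries in {0, 1} and with at most 3 nonzero entries in each column, and vectors c_1, …, c_n : Fin q → ℤ with nonempty pairwise disjoint supports, each c_i primitive (gcd of coordinates 1), such that the map φ(u) := Σ_i u_i • c_i satisfies: (i) for every u : Fin n → ℤ, u ∈ ker_ℤ(A) if and only if φ(u) ∈ ker_ℤ(H), and φ restricts to a bijection from ker_ℤ(A) onto ker_ℤ(H); (ii) φ restricts to a bijection from the Graver basis Gr(A) onto Gr(H) and from the set of circuits of A onto the set of circuits of H; (iii) the ℓ¹-norm of φ(u) is at least the ℓ¹-norm of u for every u; (iv) ker_ℤ(H) contains no nonzero componentwise-nonnegative vector and no element of Gr(H) admits a proper semiconformal decomposition in ker_ℤ(H). -/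
import Mathlib



/-- The integer kernel of an integer matrix. -/
def kerZ {m n : ℕ} (A : Matrix (Fin m) (Fin n) ℤ) : Set (Fin n → ℤ) :=
  {u | A.mulVec u = 0}

/-- The componentwise positive part `u⁺` of an integer vector. -/
def posPartZ {n : ℕ} (u : Fin n → ℤ) : Fin n → ℤ := fun i => max (u i) 0

/-- The componentwise negative part `u⁻` of an integer vector. -/
def negPartZ {n : ℕ} (u : Fin n → ℤ) : Fin n → ℤ := fun i => max (-u i) 0

/-- `u = v + w` is a proper conformal decomposition within `kerZ A`. -/
def IsProperConformalDecomp {m n : ℕ} (A : Matrix (Fin m) (Fin n) ℤ)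
    (u v w : Fin n → ℤ) : Prop :=
  v ∈ kerZ A ∧ w ∈ kerZ A ∧ v ≠ 0 ∧ w ≠ 0 ∧ u = v + w ∧
    posPartZ u = posPartZ v + posPartZ w ∧ negPartZ u = negPartZ v + negPartZ w

/-- `u` belongs to the Graver basis of `A`: it is a nonzero element of the integer
kernel admitting no proper conformal decomposition. -/
def InGraver {m n : ℕ} (A : Matrix (Fin m) (Fin n) ℤ) (u : Fin n → ℤ) : Prop :=
  u ∈ kerZ A ∧ u ≠ 0 ∧ ¬ ∃ v w, IsProperConformalDecomp A u v w

/-- `u = v + w` is a proper semiconformal decomposition within `kerZ A`. -/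
def IsProperSemiconformalDecomp {m n : ℕ} (A : Matrix (Fin m) (Fin n) ℤ)
    (u v w : Fin n → ℤ) : Prop :=
  v ∈ kerZ A ∧ w ∈ kerZ A ∧ v ≠ 0 ∧ w ≠ 0 ∧ u = v + w ∧
    ∀ i, (0 < v i → 0 ≤ w i) ∧ (w i < 0 → v i ≤ 0)

/-- `u` is a circuit of `A`: a nonzero integer kernel element with coprime coordinates
whose support is minimal among supports of nonzero kernel elements. -/
def IsCircuit {m n : ℕ} (A : Matrix (Fin m) (Fin n) ℤ) (u : Fin n → ℤ) : Prop :=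
  u ∈ kerZ A ∧ u ≠ 0 ∧ Finset.univ.gcd u = 1 ∧
    ∀ v ∈ kerZ A, v ≠ 0 → Function.support v ⊆ Function.support u →
      Function.support v = Function.support u

/-- The map `φ(u) = Σ_i u_i • c_i`. -/
def phiMap {n q : ℕ} (c : Fin n → Fin q → ℤ) (u : Fin n → ℤ) : Fin q → ℤ :=
  ∑ i, u i • c i


namespace HypEnc
open Finset

variable {m n : ℕ}

def S (A : Matrix (Fin m) (Fin n) ℤ) : ℕ := ∑ i : Fin n, ∑ k : Fin m, (A k i).natAbs

def L (A : Matrix (Fin m) (Fin n) ℤ) : ℕ := 2 * S A + 2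

lemma L_ge (A : Matrix (Fin m) (Fin n) ℤ) : 2 ≤ L A := by unfold L; omega

def O (A : Matrix (Fin m) (Fin n) ℤ) (k : Fin m) (i : Fin n) : ℕ :=
  ∑ k' ∈ univ.filter (fun k' => k' < k), (A k' i).natAbs

lemma O_insert (A : Matrix (Fin m) (Fin n) ℤ) (k : Fin m) (i : Fin n) :
    O A k i + (A k i).natAbs
      = ∑ k' ∈ insert k (univ.filter (fun k' => k' < k)), (A k' i).natAbs := by
  rw [Finset.sum_insert (by simp)]
  unfold O
  omega

lemma O_add_le (A : Matrix (Fin m) (Fin n) ℤ) (k : Fin m) (i : Fin n) :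
    O A k i + (A k i).natAbs ≤ S A := by
  rw [O_insert]
  calc ∑ k' ∈ insert k (univ.filter (fun k' => k' < k)), (A k' i).natAbs
      ≤ ∑ k' : Fin m, (A k' i).natAbs :=
        Finset.sum_le_sum_of_subset (Finset.subset_univ _)
    _ ≤ S A := Finset.single_le_sum (f := fun i => ∑ k' : Fin m, (A k' i).natAbs)
        (fun _ _ => Nat.zero_le _) (mem_univ i)

lemma O_mono (A : Matrix (Fin m) (Fin n) ℤ) {k k' : Fin m} (h : k < k') (i : Fin n) :
    O A k i + (A k i).natAbs ≤ O A k' i := by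
  rw [O_insert]
  apply Finset.sum_le_sum_of_subset
  intro x hx
  simp only [Finset.mem_insert, Finset.mem_filter, Finset.mem_univ, true_and] at hx ⊢
  rcases hx with rfl | hx
  · exact h
  · exact lt_trans hx h

def eC (A : Matrix (Fin m) (Fin n) ℤ) : Fin n × Fin (L A) ≃ Fin (n * L A) := finProdFinEquiv

def eP (A : Matrix (Fin m) (Fin n) ℤ) : Fin n × Fin (L A - 1) ≃ Fin (n * (L A - 1)) :=
  finProdFinEquiv

def eR (A : Matrix (Fin m) (Fin n) ℤ) :
    (Fin (n * (L A - 1)) ⊕ Fin m) ≃ Fin (n * (L A - 1) + m) := finSumFinEquiv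

/-- sign of a coordinate slot -/
def sg (t : ℕ) : ℤ := if t % 2 = 0 then 1 else -1

lemma sg_succ (t : ℕ) : sg (t + 1) = - sg t := by
  unfold sg
  rcases Nat.mod_two_eq_zero_or_one t with h | h <;>
    · have h2 : (t+1) % 2 = 1 - t % 2 := by omega
      simp [h, h2]

lemma sg_cases (t : ℕ) : sg t = 1 ∨ sg t = -1 := by
  unfold sg; split_ifs <;> simp

lemma sg_ne_zero (t : ℕ) : sg t ≠ 0 := by
  rcases sg_cases t with h | h <;> simp [h]

/-- parity used for row k, column block i -/
def bpar (A : Matrix (Fin m) (Fin n) ℤ) (k : Fin m) (i : Fin n) : ℕ :=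
  if 0 < A k i then 0 else 1

lemma bpar_le (A : Matrix (Fin m) (Fin n) ℤ) (k : Fin m) (i : Fin n) : bpar A k i ≤ 1 := by
  unfold bpar; split_ifs <;> omega

def cvec (A : Matrix (Fin m) (Fin n) ℤ) (i : Fin n) : Fin (n * L A) → ℤ := fun j =>
  if ((eC A).symm j).1 = i then sg (((eC A).symm j).2 : ℕ) else 0

def Hrow (A : Matrix (Fin m) (Fin n) ℤ) (s : Fin (n * (L A - 1)) ⊕ Fin m)
    (p : Fin n × Fin (L A)) : ℤ :=
  match s with
  | .inl pr => if p.1 = ((eP A).symm pr).1 ∧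
      ((p.2 : ℕ) = (((eP A).symm pr).2 : ℕ) ∨ (p.2 : ℕ) = (((eP A).symm pr).2 : ℕ) + 1)
      then 1 else 0
  | .inr k => if A k p.1 ≠ 0 ∧ (p.2 : ℕ) % 2 = bpar A k p.1 ∧
      O A k p.1 ≤ (p.2 : ℕ) / 2 ∧ (p.2 : ℕ) / 2 < O A k p.1 + (A k p.1).natAbs
      then 1 else 0

def Hmat (A : Matrix (Fin m) (Fin n) ℤ) :
    Matrix (Fin (n * (L A - 1) + m)) (Fin (n * L A)) ℤ :=
  fun r j => Hrow A ((eR A).symm r) ((eC A).symm j)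



lemma phi_apply' (A : Matrix (Fin m) (Fin n) ℤ) (u : Fin n → ℤ) (j : Fin (n * L A)) :
    phiMap (cvec A) u j = u (((eC A).symm j).1) * sg ((((eC A).symm j).2 : ℕ)) := by
  unfold phiMap cvec
  simp only [Finset.sum_apply, Pi.smul_apply, smul_eq_mul]
  rw [Finset.sum_eq_single (((eC A).symm j).1)]
  · simp
  · intro b _ hb; simp [Ne.symm hb]
  · simp

lemma phi_apply (A : Matrix (Fin m) (Fin n) ℤ) (u : Fin n → ℤ) (p : Fin n × Fin (L A)) :
    phiMap (cvec A) u (eC A p) = u p.1 * sg ((p.2 : ℕ)) := by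
  rw [phi_apply', Equiv.symm_apply_apply]

lemma mulVec_eq (A : Matrix (Fin m) (Fin n) ℤ) (z : Fin (n * L A) → ℤ)
    (s : Fin (n * (L A - 1)) ⊕ Fin m) :
    (Hmat A).mulVec z (eR A s) = ∑ p : Fin n × Fin (L A), Hrow A s p * z (eC A p) := by
  unfold Matrix.mulVec dotProduct Hmat
  rw [← Equiv.sum_comp (eC A) (fun j => Hrow A ((eR A).symm (eR A s)) ((eC A).symm j) * z j)]
  simp

-- the two Fin (L A) endpoints of a path row
def tlo (A : Matrix (Fin m) (Fin n) ℤ) (t : Fin (L A - 1)) : Fin (L A) :=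
  ⟨(t : ℕ), by have := t.isLt; have := L_ge A; omega⟩
def thi (A : Matrix (Fin m) (Fin n) ℤ) (t : Fin (L A - 1)) : Fin (L A) :=
  ⟨(t : ℕ) + 1, by have := t.isLt; have := L_ge A; omega⟩

lemma mulVec_path (A : Matrix (Fin m) (Fin n) ℤ) (z : Fin (n * L A) → ℤ)
    (i : Fin n) (t : Fin (L A - 1)) :
    (Hmat A).mulVec z (eR A (.inl (eP A (i, t)))) =
      z (eC A (i, tlo A t)) + z (eC A (i, thi A t)) := by
  rw [mulVec_eq]
  have key : (Finset.univ.filter (fun p : Fin n × Fin (L A) => p.1 = i ∧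
      ((p.2 : ℕ) = (t : ℕ) ∨ (p.2 : ℕ) = (t : ℕ) + 1))) = {(i, tlo A t), (i, thi A t)} := by
    ext ⟨a, b⟩
    simp only [Finset.mem_filter, Finset.mem_univ, true_and, Finset.mem_insert,
      Finset.mem_singleton, Prod.mk.injEq, Fin.ext_iff, tlo, thi]
    omega
  calc (∑ p : Fin n × Fin (L A), Hrow A (.inl (eP A (i, t))) p * z (eC A p))
      = ∑ p ∈ Finset.univ.filter (fun p : Fin n × Fin (L A) => p.1 = i ∧
          ((p.2 : ℕ) = (t : ℕ) ∨ (p.2 : ℕ) = (t : ℕ) + 1)), z (eC A p) := by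
        rw [Finset.sum_filter]
        apply Finset.sum_congr rfl
        intro p _
        simp only [Hrow, Equiv.symm_apply_apply]
        split_ifs <;> simp
    _ = _ := by
        rw [key, Finset.sum_pair (by simp [tlo, thi, Prod.ext_iff, Fin.ext_iff])]

lemma inner_sum (A : Matrix (Fin m) (Fin n) ℤ) (u : Fin n → ℤ) (k : Fin m) (i : Fin n) :
    ∑ t : Fin (L A), Hrow A (.inr k) (i, t) * (u i * sg (t : ℕ)) = A k i * u i := by
  by_cases hA : A k i = 0
  · simp [Hrow, hA]
  · have hoa : O A k i + (A k i).natAbs ≤ S A := O_add_le A k i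
    have hb1 : bpar A k i ≤ 1 := bpar_le A k i
    have hL : L A = 2 * S A + 2 := rfl
    have hsum : ∑ t : Fin (L A), Hrow A (.inr k) (i, t) * (u i * sg (t : ℕ))
        = ∑ tv ∈ Finset.range (L A),
            (if tv % 2 = bpar A k i ∧ O A k i ≤ tv / 2 ∧ tv / 2 < O A k i + (A k i).natAbs
              then (u i * sg tv) else 0) := by
      rw [← Fin.sum_univ_eq_sum_range]
      apply Finset.sum_congr rfl
      intro t _
      simp only [Hrow, hA, ne_eq, not_false_eq_true, true_and]
      split_ifs <;> simp
    rw [hsum, ← Finset.sum_filter]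
    have hfilter : (Finset.range (L A)).filter
          (fun tv => tv % 2 = bpar A k i ∧ O A k i ≤ tv / 2 ∧ tv / 2 < O A k i + (A k i).natAbs)
        = (Finset.Ico (O A k i) (O A k i + (A k i).natAbs)).image (fun s => 2 * s + bpar A k i) := by
      ext tv
      simp only [Finset.mem_filter, Finset.mem_range, Finset.mem_image, Finset.mem_Ico]
      constructor
      · rintro ⟨h1, h2, h3, h4⟩
        exact ⟨tv / 2, ⟨h3, h4⟩, by omega⟩
      · rintro ⟨s, ⟨hs1, hs2⟩, rfl⟩
        omega
    have hcong : ∀ tv ∈ (Finset.range (L A)).filter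
          (fun tv => tv % 2 = bpar A k i ∧ O A k i ≤ tv / 2 ∧ tv / 2 < O A k i + (A k i).natAbs),
        u i * sg tv = u i * (if bpar A k i = 0 then 1 else -1) := by
      intro tv htv
      simp only [Finset.mem_filter] at htv
      unfold sg
      rw [htv.2.1]
    rw [Finset.sum_congr rfl hcong, Finset.sum_const, hfilter,
      Finset.card_image_of_injective _ (fun x y h => by omega), Nat.card_Ico,
      Nat.add_sub_cancel_left, nsmul_eq_mul]
    rcases lt_trichotomy (A k i) 0 with h | h | h
    · have hb : bpar A k i = 1 := by unfold bpar; split_ifs <;> omega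
      have ha : ((A k i).natAbs : ℤ) = -(A k i) := by omega
      rw [hb, ha]; ring_nf; simp
    · exact absurd h hA
    · have hb : bpar A k i = 0 := by unfold bpar; split_ifs <;> omega
      have ha : ((A k i).natAbs : ℤ) = A k i := by omega
      rw [hb, ha]; ring_nf; simp

lemma mulVec_Arow (A : Matrix (Fin m) (Fin n) ℤ) (u : Fin n → ℤ) (k : Fin m) :
    (Hmat A).mulVec (phiMap (cvec A) u) (eR A (.inr k)) = A.mulVec u k := by
  rw [mulVec_eq, Fintype.sum_prod_type]
  have : ∀ i : Fin n, ∑ t : Fin (L A), Hrow A (.inr k) (i, t) * phiMap (cvec A) u (eC A (i, t))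
      = A k i * u i := by
    intro i
    rw [← inner_sum A u k i]
    apply Finset.sum_congr rfl
    intro t _
    rw [phi_apply]
  rw [Finset.sum_congr rfl (fun i _ => this i)]
  rfl

lemma phiMap_add {q : ℕ} (c : Fin n → Fin q → ℤ) (a b : Fin n → ℤ) :
    phiMap c (a + b) = phiMap c a + phiMap c b := by
  unfold phiMap
  simp [add_smul, Finset.sum_add_distrib]

def t0 (A : Matrix (Fin m) (Fin n) ℤ) : Fin (L A) := ⟨0, by have := L_ge A; omega⟩
def t1 (A : Matrix (Fin m) (Fin n) ℤ) : Fin (L A) := ⟨1, by have := L_ge A; omega⟩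

lemma phi_at_t0 (A : Matrix (Fin m) (Fin n) ℤ) (u : Fin n → ℤ) (i : Fin n) :
    phiMap (cvec A) u (eC A (i, t0 A)) = u i := by
  rw [phi_apply]; simp [t0, sg]

lemma phi_at_t1 (A : Matrix (Fin m) (Fin n) ℤ) (u : Fin n → ℤ) (i : Fin n) :
    phiMap (cvec A) u (eC A (i, t1 A)) = -u i := by
  rw [phi_apply]; simp [t1, sg]

lemma phi_inj (A : Matrix (Fin m) (Fin n) ℤ) : Function.Injective (phiMap (cvec A)) := by
  intro a b h
  funext i
  have := congrFun h (eC A (i, t0 A))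
  rwa [phi_at_t0, phi_at_t0] at this

def uof (A : Matrix (Fin m) (Fin n) ℤ) (z : Fin (n * L A) → ℤ) : Fin n → ℤ :=
  fun i => z (eC A (i, t0 A))

lemma ker_path (A : Matrix (Fin m) (Fin n) ℤ) {z : Fin (n * L A) → ℤ}
    (hz : z ∈ kerZ (Hmat A)) (i : Fin n) (t : Fin (L A)) :
    z (eC A (i, t)) = sg (t : ℕ) * z (eC A (i, t0 A)) := by
  have key : ∀ (tv : ℕ) (h : tv < L A),
      z (eC A (i, ⟨tv, h⟩)) = sg tv * z (eC A (i, t0 A)) := by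
    intro tv
    induction tv with
    | zero => intro h; simp [sg, t0]
    | succ tv ih =>
      intro h
      have htv : tv < L A - 1 := by omega
      have hrow := congrFun hz (eR A (.inl (eP A (i, ⟨tv, htv⟩))))
      rw [mulVec_path] at hrow
      simp only [Pi.zero_apply] at hrow
      have h1 : z (eC A (i, thi A ⟨tv, htv⟩)) = - z (eC A (i, tlo A ⟨tv, htv⟩)) := by
        linarith
      have h2 : (⟨tv + 1, h⟩ : Fin (L A)) = thi A ⟨tv, htv⟩ := rfl
      have h3 : (tlo A ⟨tv, htv⟩ : Fin (L A)) = ⟨tv, by omega⟩ := rfl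
      rw [h2, h1, h3, ih (by omega), sg_succ]
      ring
  have := key (t : ℕ) t.isLt
  simpa using this

lemma phi_uof (A : Matrix (Fin m) (Fin n) ℤ) {z : Fin (n * L A) → ℤ}
    (hz : z ∈ kerZ (Hmat A)) : phiMap (cvec A) (uof A z) = z := by
  funext j
  rw [phi_apply']
  conv_rhs => rw [← Equiv.apply_symm_apply (eC A) j]
  rw [← Prod.mk.eta (p := (eC A).symm j), ker_path A hz]
  unfold uof
  ring

lemma kerT1 (A : Matrix (Fin m) (Fin n) ℤ) (u : Fin n → ℤ) :
    u ∈ kerZ A ↔ phiMap (cvec A) u ∈ kerZ (Hmat A) := by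
  constructor
  · intro hu
    show _ = _
    funext r
    obtain ⟨s, rfl⟩ : ∃ s, r = eR A s := ⟨(eR A).symm r, ((eR A).apply_symm_apply r).symm⟩
    simp only [Pi.zero_apply]
    cases s with
    | inl pr =>
      obtain ⟨⟨i, t⟩, rfl⟩ : ∃ p, pr = eP A p :=
        ⟨(eP A).symm pr, ((eP A).apply_symm_apply pr).symm⟩
      rw [mulVec_path, phi_apply, phi_apply]
      show u i * sg (t : ℕ) + u i * sg ((t : ℕ) + 1) = 0
      rw [sg_succ]; ring
    | inr k =>
      rw [mulVec_Arow]
      exact congrFun hu k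
  · intro hz
    show _ = _
    funext k
    have := congrFun hz (eR A (.inr k))
    rw [mulVec_Arow] at this
    exact this

lemma ker_surj (A : Matrix (Fin m) (Fin n) ℤ) {z : Fin (n * L A) → ℤ}
    (hz : z ∈ kerZ (Hmat A)) : ∃ u ∈ kerZ A, phiMap (cvec A) u = z := by
  refine ⟨uof A z, ?_, phi_uof A hz⟩
  rw [kerT1, phi_uof A hz]
  exact hz

lemma phiMap_zero {q : ℕ} (c : Fin n → Fin q → ℤ) : phiMap c 0 = 0 := by
  unfold phiMap; simp

lemma phi_ne_zero (A : Matrix (Fin m) (Fin n) ℤ) (u : Fin n → ℤ) :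
    u ≠ 0 ↔ phiMap (cvec A) u ≠ 0 := by
  constructor
  · intro h hc; exact h (phi_inj A (by rw [hc, phiMap_zero]))
  · intro h hc; exact h (by rw [hc, phiMap_zero])

lemma conf_iff {k : ℕ} (u v w : Fin k → ℤ) (h : u = v + w) :
    (posPartZ u = posPartZ v + posPartZ w ∧ negPartZ u = negPartZ v + negPartZ w) ↔
      ∀ i, (0 ≤ v i ∧ 0 ≤ w i) ∨ (v i ≤ 0 ∧ w i ≤ 0) := by
  constructor
  · rintro ⟨h1, h2⟩ i
    have h0 : u i = v i + w i := by rw [h]; rfl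
    have e1 := congrFun h1 i
    have e2 := congrFun h2 i
    simp only [posPartZ, negPartZ, Pi.add_apply, max_def] at e1 e2
    split_ifs at e1 e2 <;> omega
  · intro hs
    constructor <;> funext i <;>
      · have h0 : u i = v i + w i := by rw [h]; rfl
        have := hs i
        simp only [posPartZ, negPartZ, Pi.add_apply, max_def]
        split_ifs <;> omega

lemma conf_phi (A : Matrix (Fin m) (Fin n) ℤ) (v w : Fin n → ℤ) :
    (∀ i, (0 ≤ v i ∧ 0 ≤ w i) ∨ (v i ≤ 0 ∧ w i ≤ 0)) ↔
      (∀ j, (0 ≤ phiMap (cvec A) v j ∧ 0 ≤ phiMap (cvec A) w j) ∨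
        (phiMap (cvec A) v j ≤ 0 ∧ phiMap (cvec A) w j ≤ 0)) := by
  constructor
  · intro hs j
    rw [phi_apply', phi_apply']
    have := hs (((eC A).symm j).1)
    rcases sg_cases ((((eC A).symm j).2 : ℕ)) with h | h <;> rw [h]
    · simpa using this
    · simp only [mul_neg_one]; omega
  · intro hs i
    have h1 := hs (eC A (i, t0 A))
    rw [phi_at_t0, phi_at_t0] at h1
    exact h1

lemma conf_decomp_iff (A : Matrix (Fin m) (Fin n) ℤ) (u : Fin n → ℤ) :
    (∃ v w, IsProperConformalDecomp A u v w) ↔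
      (∃ v w, IsProperConformalDecomp (Hmat A) (phiMap (cvec A) u) v w) := by
  constructor
  · rintro ⟨v, w, hv, hw, hv0, hw0, heq, hp, hn⟩
    refine ⟨phiMap (cvec A) v, phiMap (cvec A) w, (kerT1 A v).1 hv, (kerT1 A w).1 hw,
      (phi_ne_zero A v).1 hv0, (phi_ne_zero A w).1 hw0, ?_, ?_⟩
    · rw [heq, phiMap_add]
    · exact (conf_iff _ _ _ (by rw [heq, phiMap_add])).2
        ((conf_phi A v w).1 ((conf_iff u v w heq).1 ⟨hp, hn⟩))
  · rintro ⟨v', w', hv, hw, hv0, hw0, heq, hp, hn⟩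
    obtain ⟨a, ha, rfl⟩ := ker_surj A hv
    obtain ⟨b, hb, rfl⟩ := ker_surj A hw
    have huab : u = a + b := by
      apply phi_inj A
      rw [phiMap_add, heq]
    refine ⟨a, b, ha, hb, (phi_ne_zero A a).2 hv0, (phi_ne_zero A b).2 hw0, huab, ?_⟩
    exact (conf_iff u a b huab).2
      ((conf_phi A a b).2 ((conf_iff _ _ _ heq).1 ⟨hp, hn⟩))

lemma graver_iff (A : Matrix (Fin m) (Fin n) ℤ) (u : Fin n → ℤ) :
    InGraver A u ↔ InGraver (Hmat A) (phiMap (cvec A) u) := by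
  unfold InGraver
  rw [← kerT1, ← phi_ne_zero, ← conf_decomp_iff]

lemma gcd_nonneg' {q : ℕ} (s : Finset (Fin q)) (f : Fin q → ℤ) : 0 ≤ s.gcd f := by
  induction s using Finset.induction with
  | empty => simp
  | insert h ih => rw [Finset.gcd_insert]; rw [← Int.coe_gcd]; positivity

lemma gcd_phi (A : Matrix (Fin m) (Fin n) ℤ) (u : Fin n → ℤ) :
    Finset.univ.gcd (phiMap (cvec A) u) = Finset.univ.gcd u := by
  apply Int.dvd_antisymm (gcd_nonneg' _ _) (gcd_nonneg' _ _)
  · apply Finset.dvd_gcd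
    intro i _
    have := Finset.gcd_dvd (f := phiMap (cvec A) u) (Finset.mem_univ (eC A (i, t0 A)))
    rwa [phi_at_t0] at this
  · apply Finset.dvd_gcd
    intro j _
    rw [phi_apply']
    exact Dvd.dvd.mul_right (Finset.gcd_dvd (Finset.mem_univ _)) _

lemma supp_phi (A : Matrix (Fin m) (Fin n) ℤ) (u : Fin n → ℤ) (j : Fin (n * L A)) :
    phiMap (cvec A) u j ≠ 0 ↔ u (((eC A).symm j).1) ≠ 0 := by
  rw [phi_apply']
  simp [mul_eq_zero, sg_ne_zero]

lemma supp_sub_iff (A : Matrix (Fin m) (Fin n) ℤ) (v u : Fin n → ℤ) :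
    Function.support (phiMap (cvec A) v) ⊆ Function.support (phiMap (cvec A) u) ↔
      Function.support v ⊆ Function.support u := by
  constructor
  · intro h i hi
    have h1 : eC A (i, t0 A) ∈ Function.support (phiMap (cvec A) v) := by
      simp only [Function.mem_support, phi_at_t0]; exact hi
    have h2 := h h1
    simp only [Function.mem_support, phi_at_t0] at h2
    exact h2
  · intro h j hj
    simp only [Function.mem_support, supp_phi] at hj ⊢
    exact h hj

lemma circuit_iff (A : Matrix (Fin m) (Fin n) ℤ) (u : Fin n → ℤ) :
    IsCircuit A u ↔ IsCircuit (Hmat A) (phiMap (cvec A) u) := by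
  constructor
  · rintro ⟨hker, hne, hgcd, hmin⟩
    refine ⟨(kerT1 A u).1 hker, (phi_ne_zero A u).1 hne, by rw [gcd_phi]; exact hgcd, ?_⟩
    intro z' hz' hz'0 hsub
    obtain ⟨b, hb, rfl⟩ := ker_surj A hz'
    have hb0 : b ≠ 0 := (phi_ne_zero A b).2 hz'0
    have hsb : Function.support b ⊆ Function.support u := (supp_sub_iff A b u).1 hsub
    have heq := hmin b hb hb0 hsb
    exact subset_antisymm hsub ((supp_sub_iff A u b).2 heq.symm.subset)
  · rintro ⟨hker, hne, hgcd, hmin⟩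
    refine ⟨(kerT1 A u).2 hker, (phi_ne_zero A u).2 hne, by rw [← gcd_phi A u]; exact hgcd, ?_⟩
    intro v hv hv0 hsub
    have h1 := hmin (phiMap (cvec A) v) ((kerT1 A v).1 hv) ((phi_ne_zero A v).1 hv0)
      ((supp_sub_iff A v u).2 hsub)
    exact subset_antisymm hsub ((supp_sub_iff A u v).1 h1.symm.subset)

lemma entries01 (A : Matrix (Fin m) (Fin n) ℤ) (r : Fin (n * (L A - 1) + m))
    (j : Fin (n * L A)) : Hmat A r j = 0 ∨ Hmat A r j = 1 := by
  unfold Hmat Hrow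
  rcases (eR A).symm r with pr | k <;> dsimp only <;> split_ifs <;> simp

lemma cvec_t0 (A : Matrix (Fin m) (Fin n) ℤ) (i : Fin n) :
    cvec A i (eC A (i, t0 A)) = 1 := by
  unfold cvec
  rw [Equiv.symm_apply_apply]
  simp [t0, sg]

lemma gcd_cvec (A : Matrix (Fin m) (Fin n) ℤ) (i : Fin n) :
    Finset.univ.gcd (cvec A i) = 1 := by
  apply Int.eq_one_of_dvd_one (gcd_nonneg' _ _)
  have := Finset.gcd_dvd (f := cvec A i) (Finset.mem_univ (eC A (i, t0 A)))
  rwa [cvec_t0] at this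

lemma cvec_supp_nonempty (A : Matrix (Fin m) (Fin n) ℤ) (i : Fin n) :
    (Function.support (cvec A i)).Nonempty := by
  exact ⟨eC A (i, t0 A), by rw [Function.mem_support, cvec_t0]; norm_num⟩

lemma cvec_disjoint (A : Matrix (Fin m) (Fin n) ℤ) (i i' : Fin n) (h : i ≠ i') :
    Disjoint (Function.support (cvec A i)) (Function.support (cvec A i')) := by
  rw [Set.disjoint_left]
  intro j hj hj'
  rw [Function.mem_support] at hj hj'
  unfold cvec at hj hj'
  split_ifs at hj hj' with h1 h2
  · exact h (h1 ▸ h2)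
  all_goals simp_all

lemma abs_sg (t : ℕ) : |sg t| = 1 := by
  rcases sg_cases t with h | h <;> simp [h]

lemma l1_bound (A : Matrix (Fin m) (Fin n) ℤ) (u : Fin n → ℤ) :
    ∑ i, |u i| ≤ ∑ j, |phiMap (cvec A) u j| := by
  have h1 : ∑ j, |phiMap (cvec A) u j| = ∑ p : Fin n × Fin (L A), |u p.1| := by
    rw [← Equiv.sum_comp (eC A) (fun j => |phiMap (cvec A) u j|)]
    apply Finset.sum_congr rfl
    intro p _
    rw [phi_apply, abs_mul, abs_sg, mul_one]
  rw [h1, Fintype.sum_prod_type]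
  apply Finset.sum_le_sum
  intro i _
  simp only
  rw [Finset.sum_const, Finset.card_univ, Fintype.card_fin, nsmul_eq_mul]
  have hL : (1 : ℤ) ≤ (L A : ℤ) := by
    have := L_ge A; exact_mod_cast by omega
  nlinarith [abs_nonneg (u i)]

lemma no_nonneg (A : Matrix (Fin m) (Fin n) ℤ) :
    ¬ ∃ z ∈ kerZ (Hmat A), z ≠ 0 ∧ ∀ j, 0 ≤ z j := by
  rintro ⟨z, hz, hz0, hpos⟩
  obtain ⟨u, hu, rfl⟩ := ker_surj A hz
  apply hz0
  have hu0 : u = 0 := by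
    funext i
    have h1 := hpos (eC A (i, t0 A))
    have h2 := hpos (eC A (i, t1 A))
    rw [phi_at_t0] at h1
    rw [phi_at_t1] at h2
    simp only [Pi.zero_apply]
    omega
  rw [hu0, phiMap_zero]

lemma no_semiconf (A : Matrix (Fin m) (Fin n) ℤ) :
    ¬ ∃ z v w : Fin (n * L A) → ℤ, InGraver (Hmat A) z ∧
      IsProperSemiconformalDecomp (Hmat A) z v w := by
  rintro ⟨z, v, w, hg, hv, hw, hv0, hw0, heq, hsc⟩
  obtain ⟨u, hu, rfl⟩ := ker_surj A hg.1
  obtain ⟨a, ha, rfl⟩ := ker_surj A hv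
  obtain ⟨b, hb, rfl⟩ := ker_surj A hw
  have huab : u = a + b := by
    apply phi_inj A
    rw [phiMap_add, heq]
  have hss : ∀ i, (0 ≤ a i ∧ 0 ≤ b i) ∨ (a i ≤ 0 ∧ b i ≤ 0) := by
    intro i
    have h1 := hsc (eC A (i, t0 A))
    have h2 := hsc (eC A (i, t1 A))
    rw [phi_at_t0, phi_at_t0] at h1
    rw [phi_at_t1, phi_at_t1] at h2
    omega
  apply hg.2.2
  refine ⟨phiMap (cvec A) a, phiMap (cvec A) b, hv, hw, hv0, hw0, heq, ?_⟩
  exact (conf_iff _ _ _ heq).2 ((conf_phi A a b).1 hss)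

lemma col_card (A : Matrix (Fin m) (Fin n) ℤ) (j : Fin (n * L A)) :
    (Finset.univ.filter fun r => Hmat A r j ≠ 0).card ≤ 3 := by
  set p := (eC A).symm j with hp
  set g : Fin (n * (L A - 1) + m) → Fin 3 := fun r =>
    Sum.elim (fun pr => if ((((eP A).symm pr).2 : Fin (L A - 1)) : ℕ) = (p.2 : ℕ)
      then (0 : Fin 3) else 1) (fun _ => 2) ((eR A).symm r) with hg
  have hcard : (Finset.univ : Finset (Fin 3)).card = 3 := by simp
  rw [← hcard]
  apply Finset.card_le_card_of_injOn g (fun _ _ => Finset.mem_univ _)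
  intro r hr r' hr' hgr
  simp only [Finset.coe_filter, Set.mem_setOf_eq, Finset.mem_univ, true_and] at hr hr'
  have hr2 : Hrow A ((eR A).symm r) p ≠ 0 := hr
  have hr2' : Hrow A ((eR A).symm r') p ≠ 0 := hr'
  suffices hsuf : (eR A).symm r = (eR A).symm r' by
    exact (eR A).symm.injective hsuf
  simp only [hg] at hgr
  rcases hsr : (eR A).symm r with pr | k <;> rcases hsr' : (eR A).symm r' with pr' | k' <;>
    rw [hsr] at hr2 hgr <;> rw [hsr'] at hr2' hgr <;>
    simp only [Hrow, Sum.elim_inl, Sum.elim_inr] at hr2 hr2' hgr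
  · -- inl inl
    split_ifs at hr2 with hc
    swap; · exact absurd rfl hr2
    split_ifs at hr2' with hc'
    swap; · exact absurd rfl hr2'
    have hval : ((((eP A).symm pr).2 : Fin (L A - 1)) : ℕ)
        = ((((eP A).symm pr').2 : Fin (L A - 1)) : ℕ) := by
      split_ifs at hgr with h1 h2 h2
      · omega
      · exact absurd hgr (by decide)
      · exact absurd hgr (by decide)
      · rcases hc.2 with h | h <;> rcases hc'.2 with h' | h' <;> omega
    have : (eP A).symm pr = (eP A).symm pr' := by
      apply Prod.ext
      · exact hc.1.symm.trans hc'.1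
      · exact Fin.ext hval
    rw [(eP A).symm.injective this]
  · split_ifs at hgr <;> exact absurd hgr (by decide)
  · split_ifs at hgr <;> exact absurd hgr (by decide)
  · -- inr inr
    split_ifs at hr2 with hc
    swap; · exact absurd rfl hr2
    split_ifs at hr2' with hc'
    swap; · exact absurd rfl hr2'
    have hkk : k = k' := by
      by_contra hne
      rcases lt_or_gt_of_ne hne with hlt | hlt
      · have := O_mono A hlt p.1
        omega
      · have := O_mono A hlt p.1
        omega
    rw [hkk]

lemma bijOn_helper {q : ℕ} (f : (Fin n → ℤ) → (Fin q → ℤ)) (X : Set (Fin n → ℤ))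
    (Y : Set (Fin q → ℤ)) (hiff : ∀ u, u ∈ X ↔ f u ∈ Y)
    (hsurj : ∀ z ∈ Y, ∃ u, f u = z) (hinj : Function.Injective f) :
    Set.BijOn f X Y := by
  refine ⟨fun u hu => (hiff u).1 hu, hinj.injOn, ?_⟩
  intro z hz
  obtain ⟨u, rfl⟩ := hsurj z hz
  exact ⟨u, (hiff u).2 hz, rfl⟩

end HypEnc

theorem hypergraph_encoding_of_arbitrary_matrix {m n : ℕ}
    (A : Matrix (Fin m) (Fin n) ℤ)
    (hrow : ∀ i, ∃ j, A i j ≠ 0) (hcol : ∀ j, ∃ i, A i j ≠ 0) :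
    ∃ (p q : ℕ) (H : Matrix (Fin p) (Fin q) ℤ) (c : Fin n → Fin q → ℤ),
      (∀ i j, H i j = 0 ∨ H i j = 1) ∧
      (∀ j, (Finset.univ.filter fun i => H i j ≠ 0).card ≤ 3) ∧
      (∀ i, (Function.support (c i)).Nonempty) ∧
      (∀ i i', i ≠ i' → Disjoint (Function.support (c i)) (Function.support (c i'))) ∧
      (∀ i, Finset.univ.gcd (c i) = 1) ∧
      (∀ u : Fin n → ℤ, u ∈ kerZ A ↔ phiMap c u ∈ kerZ H) ∧
      Set.BijOn (phiMap c) (kerZ A) (kerZ H) ∧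
      Set.BijOn (phiMap c) {u : Fin n → ℤ | InGraver A u} {z : Fin q → ℤ | InGraver H z} ∧
      Set.BijOn (phiMap c) {u : Fin n → ℤ | IsCircuit A u} {z : Fin q → ℤ | IsCircuit H z} ∧
      (∀ u : Fin n → ℤ, ∑ i, |u i| ≤ ∑ j, |phiMap c u j|) ∧
      (¬ ∃ z ∈ kerZ H, z ≠ 0 ∧ ∀ j, 0 ≤ z j) ∧
      (¬ ∃ z v w : Fin q → ℤ, InGraver H z ∧
        IsProperSemiconformalDecomp H z v w) := by
  classical
  refine ⟨n * (HypEnc.L A - 1) + m, n * HypEnc.L A, HypEnc.Hmat A, HypEnc.cvec A,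
    HypEnc.entries01 A, HypEnc.col_card A, HypEnc.cvec_supp_nonempty A,
    HypEnc.cvec_disjoint A, HypEnc.gcd_cvec A, HypEnc.kerT1 A, ?_, ?_, ?_,
    HypEnc.l1_bound A, HypEnc.no_nonneg A, HypEnc.no_semiconf A⟩
  · exact HypEnc.bijOn_helper _ _ _ (HypEnc.kerT1 A)
      (fun z hz => by obtain ⟨u, _, h⟩ := HypEnc.ker_surj A hz; exact ⟨u, h⟩)
      (HypEnc.phi_inj A)
  · exact HypEnc.bijOn_helper _ _ _ (fun u => HypEnc.graver_iff A u)
      (fun z hz => by obtain ⟨u, _, h⟩ := HypEnc.ker_surj A hz.1; exact ⟨u, h⟩)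
      (HypEnc.phi_inj A)
  · exact HypEnc.bijOn_helper _ _ _ (fun u => HypEnc.circuit_iff A u)
      (fun z hz => by obtain ⟨u, _, h⟩ := HypEnc.ker_surj A hz.1; exact ⟨u, h⟩)
      (HypEnc.phi_inj A)
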